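/- arXiv:2402.07202 — 2 statements merged into one kernel-verified Lean document; each statement's English description precedes it below -/
import Mathlib

section
/- Let J and J̃ be two Jacobi matrices on the same finite connected graph G with n vertices, with positive edge weights {a_e}, {ã_e} respectively. Let ψ and ψ̃ be their positive normalized top eigenvectors, and set S = max over edges e=(v,w) of (a_e ψ_v ψ_w)/(ã_e ψ̃_v ψ̃_w) and I = min over vertices v of ψ_v²/ψ̃_v². Then for every k = 1,…,n, λ₁(J) - λ_k(J) ≤ (S/I)·(λ₁(J̃) - λ_k(J̃)), where λ₁ ≥ λ₂ ≥ … ≥ λ_n denote the eigenvalues in decreasing order. -/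
/-!
Ground-state transform: if `A φ = λ φ` and `A` is symmetric, then for every `g`
`2 (λ ‖φ g‖² - ⟪φ g, A (φ g)⟫) = ∑ v w, A v w φ v φ w (g v - g w)²`.
Hence the edge bound `J v w ψ v ψ w ≤ S J' v w ψ' v ψ' w` compares the forms of `J` at `ψ g` and of
`J'` at `ψ' g`, while `I ψ'² ≤ ψ²` compares the norms of `ψ' g` and `ψ g`. A dimension count gives
`g ≠ 0` with `ψ' g` in the span of the top `k + 1` eigenvectors of `J'` and `ψ g` orthogonal to the
top `k` eigenvectors of `J`; the Rayleigh bounds for these two vectors give the gap inequality.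
-/

open Finset Matrix

lemma Matrix.exists_ne_zero_mulVec_eq_zero_of_orthonormal {K n ι κ : Type*} [Field K] [Fintype n]
    [Fintype ι] [Fintype κ] [DecidableEq ι] {u : ι → n → K}
    (hu : ∀ i j, u i ⬝ᵥ u j = if i = j then 1 else 0) (p : ι → Prop) [DecidablePred p]
    (M : Matrix κ n K) (hcard : Fintype.card κ < Fintype.card {i // p i}) :
    ∃ h ≠ 0, (∀ i, ¬ p i → u i ⬝ᵥ h = 0) ∧ M *ᵥ h = 0 := by
  let L := M.mulVecLin ∘ₗ Fintype.linearCombination K (fun i : {i // p i} => u i)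
  obtain ⟨c, hcL, hc⟩ := Submodule.exists_mem_ne_zero_of_ne_bot <|
    LinearMap.ker_ne_bot_of_finrank_lt (f := L) <| by
      simpa only [Module.finrank_fintype_fun_eq_card] using hcard
  have hcoef : ∀ j, u j ⬝ᵥ ∑ i, c i • u i = if hj : p j then c ⟨j, hj⟩ else 0 := by
    intro j
    simp only [dotProduct_sum, dotProduct_smul, hu, smul_eq_mul, mul_ite, mul_one, mul_zero]
    split_ifs with hj
    · rw [Fintype.sum_eq_single ⟨j, hj⟩ fun i hi => if_neg fun h => hi (Subtype.ext h.symm)]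
      simp
    · exact Fintype.sum_eq_zero _ fun i => if_neg fun (h : j = i) => hj (h ▸ i.2)
  refine ⟨∑ i, c i • u i, fun h0 => hc (funext fun i => ?_), fun i hi => by rw [hcoef, dif_neg hi],
    by simpa only [L, LinearMap.mem_ker, LinearMap.comp_apply, Matrix.mulVecLin_apply,
      Fintype.linearCombination_apply] using hcL⟩
  simpa [h0, i.2] using (hcoef i).symm

theorem Matrix.IsSymm.two_mul_sub_dotProduct_mulVec_eq_sum {R n : Type*} [CommRing R] [Fintype n]
    {A : Matrix n n R} (hA : A.IsSymm) {φ : n → R} {lam : R} (hφ : A *ᵥ φ = lam • φ) (g : n → R) :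
    2 * (lam * ((φ * g) ⬝ᵥ (φ * g)) - (φ * g) ⬝ᵥ A *ᵥ (φ * g)) =
      ∑ v, ∑ w, A v w * (φ v * φ w) * (g v - g w) ^ 2 := by
  have hrow : ∑ v, ∑ w, A v w * (φ v * φ w) * g v ^ 2 = lam * ∑ v, φ v ^ 2 * g v ^ 2 := by
    rw [mul_sum]
    refine sum_congr rfl fun v _ => ?_
    have hφv : ∑ w, A v w * φ w = lam * φ v := by simpa [mulVec, dotProduct] using congrFun hφ v
    calc ∑ w, A v w * (φ v * φ w) * g v ^ 2 = φ v * g v ^ 2 * ∑ w, A v w * φ w := by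
          rw [mul_sum]
          exact sum_congr rfl fun w _ => by ring
      _ = lam * (φ v ^ 2 * g v ^ 2) := by rw [hφv]; ring
  have hcol : ∑ v, ∑ w, A v w * (φ v * φ w) * g w ^ 2 = lam * ∑ v, φ v ^ 2 * g v ^ 2 := by
    rw [sum_comm, ← hrow]
    refine sum_congr rfl fun v _ => sum_congr rfl fun w _ => ?_
    rw [hA.apply v w]
    ring
  have hcross : (φ * g) ⬝ᵥ A *ᵥ (φ * g) = ∑ v, ∑ w, A v w * (φ v * φ w) * (g v * g w) := by
    simp only [dotProduct, mulVec, Pi.mul_apply, mul_sum]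
    exact sum_congr rfl fun v _ => sum_congr rfl fun w _ => by ring
  have hnorm : (φ * g) ⬝ᵥ (φ * g) = ∑ v, φ v ^ 2 * g v ^ 2 :=
    sum_congr rfl fun v _ => by simp only [Pi.mul_apply]; ring
  calc 2 * (lam * ((φ * g) ⬝ᵥ (φ * g)) - (φ * g) ⬝ᵥ A *ᵥ (φ * g))
      = ∑ v, ∑ w, A v w * (φ v * φ w) * g v ^ 2 + ∑ v, ∑ w, A v w * (φ v * φ w) * g w ^ 2
        - 2 * ∑ v, ∑ w, A v w * (φ v * φ w) * (g v * g w) := by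
        rw [hrow, hcol, hcross, hnorm]; ring
    _ = _ := by
        simp only [mul_sum, ← sum_add_distrib, ← sum_sub_distrib]
        exact sum_congr rfl fun v _ => sum_congr rfl fun w _ => by ring

lemma sum_sum_mul_sub_sq_le {n : Type*} [Fintype n] {W W' : n → n → ℝ} {S : ℝ}
    (hW : ∀ v w, v ≠ w → W v w ≤ S * W' v w) (g : n → ℝ) :
    ∑ v, ∑ w, W v w * (g v - g w) ^ 2 ≤ S * ∑ v, ∑ w, W' v w * (g v - g w) ^ 2 := by
  simp only [mul_sum]
  refine sum_le_sum fun v _ => sum_le_sum fun w _ => ?_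
  rcases eq_or_ne v w with rfl | hvw
  · simp
  · rw [← mul_assoc]
    exact mul_le_mul_of_nonneg_right (hW v w hvw) (sq_nonneg _)

namespace Matrix.IsHermitian

variable {n : Type*} [Fintype n] [DecidableEq n] {A : Matrix n n ℝ} (hA : A.IsHermitian)

lemma eigenvectorBasis_dotProduct_eigenvectorBasis (i j : n) :
    ⇑(hA.eigenvectorBasis i) ⬝ᵥ ⇑(hA.eigenvectorBasis j) = if i = j then 1 else 0 := by
  rw [← orthonormal_iff_ite.mp hA.eigenvectorBasis.orthonormal i j,
    EuclideanSpace.inner_eq_star_dotProduct, dotProduct_comm]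
  simp

lemma sum_eigenvectorBasis_dotProduct_mul (f g : n → ℝ) :
    ∑ i, (⇑(hA.eigenvectorBasis i) ⬝ᵥ f) * (⇑(hA.eigenvectorBasis i) ⬝ᵥ g) = f ⬝ᵥ g := by
  have := hA.eigenvectorBasis.sum_inner_mul_inner (WithLp.toLp 2 f) (WithLp.toLp 2 g)
  simpa [EuclideanSpace.inner_eq_star_dotProduct, dotProduct_comm] using this

lemma dotProduct_mulVec_eq_sum (f : n → ℝ) :
    f ⬝ᵥ A *ᵥ f = ∑ i, hA.eigenvalues i * (⇑(hA.eigenvectorBasis i) ⬝ᵥ f) ^ 2 := by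
  rw [← hA.sum_eigenvectorBasis_dotProduct_mul f (A *ᵥ f)]
  refine sum_congr rfl fun i _ => ?_
  have hT : Aᵀ = A := isHermitian_iff_isSymm.mp hA
  rw [dotProduct_mulVec, ← mulVec_transpose, hT, mulVec_eigenvectorBasis, smul_dotProduct,
    smul_eq_mul]
  ring

lemma dotProduct_mulVec_le_of_orthogonal (t : ℝ) {f : n → ℝ}
    (hf : ∀ i, t < hA.eigenvalues i → ⇑(hA.eigenvectorBasis i) ⬝ᵥ f = 0) :
    f ⬝ᵥ A *ᵥ f ≤ t * (f ⬝ᵥ f) := by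
  rw [hA.dotProduct_mulVec_eq_sum, ← hA.sum_eigenvectorBasis_dotProduct_mul f f, mul_sum]
  refine sum_le_sum fun i _ => ?_
  rcases le_or_gt (hA.eigenvalues i) t with hi | hi
  · rw [← sq]
    exact mul_le_mul_of_nonneg_right hi (sq_nonneg _)
  · simp [hf i hi]

lemma le_dotProduct_mulVec_of_orthogonal (t : ℝ) {f : n → ℝ}
    (hf : ∀ i, hA.eigenvalues i < t → ⇑(hA.eigenvectorBasis i) ⬝ᵥ f = 0) :
    t * (f ⬝ᵥ f) ≤ f ⬝ᵥ A *ᵥ f := by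
  rw [hA.dotProduct_mulVec_eq_sum, ← hA.sum_eigenvectorBasis_dotProduct_mul f f, mul_sum]
  refine sum_le_sum fun i _ => ?_
  rcases le_or_gt t (hA.eigenvalues i) with hi | hi
  · rw [← sq]
    exact mul_le_mul_of_nonneg_right hi (sq_nonneg _)
  · simp [hf i hi]

theorem gap_mul_le_of_ground_states {B : Matrix n n ℝ} (hB : B.IsHermitian) {φ φ' : n → ℝ}
    {lam lam' : ℝ} (hφ : A *ᵥ φ = lam • φ) (hφ' : B *ᵥ φ' = lam' • φ') (hφ'_pos : ∀ v, 0 < φ' v)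
    {S I : ℝ} (hS : 0 ≤ S) (hAB : ∀ v w, v ≠ w → A v w * (φ v * φ w) ≤ S * (B v w * (φ' v * φ' w)))
    (hI : ∀ v, I * φ' v ^ 2 ≤ φ v ^ 2) {s t : ℝ} (hs : s ≤ lam)
    (hcard : Fintype.card {i // s < hA.eigenvalues i} < Fintype.card {i // t ≤ hB.eigenvalues i}) :
    (lam - s) * I ≤ S * (lam' - t) := by
  -- `h` is spanned by the eigenvectors of `B` above `t`, and `φ h / φ'` is orthogonal to those
  -- of `A` above `s`: one linear constraint per row of this matrix.
  obtain ⟨h, hne, hhB, hhA⟩ := exists_ne_zero_mulVec_eq_zero_of_orthonormal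
    hB.eigenvectorBasis_dotProduct_eigenvectorBasis (fun i => t ≤ hB.eigenvalues i)
    (of fun (j : {i // s < hA.eigenvalues i}) v => hA.eigenvectorBasis j v * (φ v / φ' v)) hcard
  set g := h / φ'
  have hh : φ' * g = h := funext fun v => mul_div_cancel₀ _ (hφ'_pos v).ne'
  have hfA : ∀ i, s < hA.eigenvalues i → ⇑(hA.eigenvectorBasis i) ⬝ᵥ (φ * g) = 0 := by
    intro i hi
    refine Eq.trans ?_ (congrFun hhA ⟨i, hi⟩)
    exact sum_congr rfl fun v _ => by simp only [of_apply, Pi.mul_apply, Pi.div_apply, g]; ring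
  have hgapA := hA.dotProduct_mulVec_le_of_orthogonal s hfA
  have hgapB := hB.le_dotProduct_mulVec_of_orthogonal t fun i hi => hhB i hi.not_ge
  have hform := sum_sum_mul_sub_sq_le (W := fun v w => A v w * (φ v * φ w)) hAB g
  rw [← (isHermitian_iff_isSymm.mp hA).two_mul_sub_dotProduct_mulVec_eq_sum hφ,
    ← (isHermitian_iff_isSymm.mp hB).two_mul_sub_dotProduct_mulVec_eq_sum hφ', hh] at hform
  have hnorm : I * (h ⬝ᵥ h) ≤ (φ * g) ⬝ᵥ (φ * g) := by
    rw [← hh, dotProduct, dotProduct, mul_sum]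
    refine sum_le_sum fun v _ => ?_
    simp only [Pi.mul_apply]
    nlinarith [mul_le_mul_of_nonneg_right (hI v) (sq_nonneg (g v))]
  have hpos : 0 < h ⬝ᵥ h :=
    (sum_nonneg fun v _ => mul_self_nonneg (h v)).lt_of_ne
      (Ne.symm (dotProduct_self_eq_zero.not.mpr hne))
  refine le_of_mul_le_mul_right ?_ hpos
  calc (lam - s) * I * (h ⬝ᵥ h) ≤ (lam - s) * ((φ * g) ⬝ᵥ (φ * g)) := by
        rw [mul_assoc]; exact mul_le_mul_of_nonneg_left hnorm (sub_nonneg.mpr hs)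
    _ ≤ lam * ((φ * g) ⬝ᵥ (φ * g)) - (φ * g) ⬝ᵥ A *ᵥ (φ * g) := by linarith
    _ ≤ S * (lam' * (h ⬝ᵥ h) - h ⬝ᵥ B *ᵥ h) := by linarith
    _ ≤ S * (lam' - t) * (h ⬝ᵥ h) := by
        rw [mul_assoc]; exact mul_le_mul_of_nonneg_left (by linarith) hS

end Matrix.IsHermitian

section Antitone

variable {ι β : Type*} [Fintype ι] [LinearOrder β] {N : ℕ} {μ : Fin N → β}

lemma Antitone.card_lt_apply_comp_le (hμ : Antitone μ) (σ : ι ≃ Fin N) (k : Fin N) :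
    Fintype.card {i // μ k < μ (σ i)} ≤ k := by
  rw [Fintype.card_congr (σ.subtypeEquiv (q := fun j => μ k < μ j) fun _ => Iff.rfl)]
  refine (Fintype.card_subtype_mono _ (fun j : Fin N => (j : ℕ) < k) fun j hj => ?_).trans
    (Fintype.card_fin_lt_of_le k.is_lt.le).le
  exact lt_of_not_ge fun hkj => (hμ hkj).not_gt hj

lemma Antitone.lt_card_le_apply_comp (hμ : Antitone μ) (σ : ι ≃ Fin N) (k : Fin N) :
    (k : ℕ) < Fintype.card {i // μ k ≤ μ (σ i)} := by
  rw [Fintype.card_congr (σ.subtypeEquiv (q := fun j => μ k ≤ μ j) fun _ => Iff.rfl)]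
  refine Nat.lt_of_lt_of_le (Nat.lt_succ_self k) ?_
  rw [← Fintype.card_fin_lt_of_le k.is_lt]
  exact Fintype.card_subtype_mono _ _ fun j hj => hμ (Nat.le_of_lt_succ hj)

end Antitone

lemma sum_edges_between_mul_le {E V : Type*} [Fintype E] [DecidableEq V] (ends : E → V × V)
    {a a' : E → ℝ} {ψ ψ' : V → ℝ} {S : ℝ}
    (hedge : ∀ e, a e * ψ (ends e).1 * ψ (ends e).2 ≤ S * (a' e * ψ' (ends e).1 * ψ' (ends e).2))
    (v w : V) :
    (∑ e ∈ univ.filter (fun e => ends e = (v, w) ∨ ends e = (w, v)), a e) * (ψ v * ψ w) ≤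
      S * ((∑ e ∈ univ.filter (fun e => ends e = (v, w) ∨ ends e = (w, v)), a' e) *
        (ψ' v * ψ' w)) := by
  rw [sum_mul, sum_mul, mul_sum]
  refine sum_le_sum fun e he => ?_
  have hle := hedge e
  rcases (mem_filter.mp he).2 with hvw | hvw <;> rw [hvw] at hle <;> dsimp only at hle <;>
    linarith

theorem stmt5_general (V E : Type*) [Fintype V] [Fintype E] [DecidableEq V]
    [Nonempty V] [Nonempty E]
    (ends : E → V × V) (a a' : E → ℝ) (ha : ∀ e, 0 < a e) (ha' : ∀ e, 0 < a' e)
    (b b' : V → ℝ)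
    (J J' : Matrix V V ℝ)
    (hJ : ∀ v w, J v w =
      if v = w then
        b v + 2 * ∑ e ∈ univ.filter (fun e => ends e = (v, v)), a e
      else
        ∑ e ∈ univ.filter (fun e => ends e = (v, w) ∨ ends e = (w, v)), a e)
    (hJ' : ∀ v w, J' v w =
      if v = w then
        b' v + 2 * ∑ e ∈ univ.filter (fun e => ends e = (v, v)), a' e
      else
        ∑ e ∈ univ.filter (fun e => ends e = (v, w) ∨ ends e = (w, v)), a' e)
    (hHerm : J.IsHermitian) (hHerm' : J'.IsHermitian)
    (hn : 0 < Fintype.card V)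
    -- eigenvalues listed in decreasing order
    (μ μ' : Fin (Fintype.card V) → ℝ) (hμdec : Antitone μ) (hμ'dec : Antitone μ')
    (hμ : ∃ σ : V ≃ Fin (Fintype.card V), μ ∘ σ = hHerm.eigenvalues)
    (hμ' : ∃ σ : V ≃ Fin (Fintype.card V), μ' ∘ σ = hHerm'.eigenvalues)
    -- normalized positive Perron eigenvectors
    (ψ ψ' : V → ℝ) (hψpos : ∀ v, 0 < ψ v) (hψ'pos : ∀ v, 0 < ψ' v)
    (hψ : J.mulVec ψ = μ ⟨0, hn⟩ • ψ) (hψ' : J'.mulVec ψ' = μ' ⟨0, hn⟩ • ψ')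
    (S I : ℝ)
    (hS : S = univ.sup' univ_nonempty fun e =>
      (a e * ψ (ends e).1 * ψ (ends e).2) /
        (a' e * ψ' (ends e).1 * ψ' (ends e).2))
    (hI : I = univ.inf' univ_nonempty fun v => ψ v ^ 2 / ψ' v ^ 2) :
    ∀ k : Fin (Fintype.card V),
      μ ⟨0, hn⟩ - μ k ≤ (S / I) * (μ' ⟨0, hn⟩ - μ' k) := by
  intro k
  obtain ⟨σ, hσ⟩ := hμ
  obtain ⟨σ', hσ'⟩ := hμ'
  have hden : ∀ e, 0 < a' e * ψ' (ends e).1 * ψ' (ends e).2 := fun e =>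
    mul_pos (mul_pos (ha' e) (hψ'pos _)) (hψ'pos _)
  have hedge : ∀ e, a e * ψ (ends e).1 * ψ (ends e).2 ≤
      S * (a' e * ψ' (ends e).1 * ψ' (ends e).2) := fun e =>
    (div_le_iff₀ (hden e)).mp <| hS ▸ le_sup' (fun e => a e * ψ (ends e).1 * ψ (ends e).2 /
      (a' e * ψ' (ends e).1 * ψ' (ends e).2)) (mem_univ e)
  have hS0 : 0 ≤ S := by
    obtain ⟨e⟩ := ‹Nonempty E›
    exact nonneg_of_mul_nonneg_left ((mul_pos (mul_pos (ha e) (hψpos _)) (hψpos _)).le.trans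
      (hedge e)) (hden e)
  have hIpos : 0 < I := hI ▸ (lt_inf'_iff _).mpr fun v _ =>
    div_pos (pow_pos (hψpos v) 2) (pow_pos (hψ'pos v) 2)
  have hIle : ∀ v, I * ψ' v ^ 2 ≤ ψ v ^ 2 := fun v => (le_div_iff₀ (pow_pos (hψ'pos v) 2)).mp <|
    hI ▸ inf'_le (fun v => ψ v ^ 2 / ψ' v ^ 2) (mem_univ v)
  have hoff : ∀ v w, v ≠ w → J v w * (ψ v * ψ w) ≤ S * (J' v w * (ψ' v * ψ' w)) := by
    intro v w hvw
    rw [hJ, hJ', if_neg hvw, if_neg hvw]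
    exact sum_edges_between_mul_le ends hedge v w
  have hcard : Fintype.card {i // μ k < hHerm.eigenvalues i} <
      Fintype.card {i // μ' k ≤ hHerm'.eigenvalues i} := by
    simp only [← hσ, ← hσ', Function.comp_apply]
    exact (hμdec.card_lt_apply_comp_le σ k).trans_lt (hμ'dec.lt_card_le_apply_comp σ' k)
  have hgap := hHerm.gap_mul_le_of_ground_states hHerm' hψ hψ' hψ'pos hS0 hoff hIle
    (hμdec (Nat.zero_le k)) hcard
  rw [div_mul_eq_mul_div, le_div_iff₀ hIpos]
  linarith

/-- Comparison of eigenvalue gaps for two Jacobi matrices on the same finite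
connected (multi)graph, via their ground states. Eigenvalues `μ`, `μ'` are
listed in decreasing order. -/
theorem stmt5 (V E : Type*) [Fintype V] [Fintype E] [DecidableEq V]
    [Nonempty V] [Nonempty E]
    (ends : E → V × V) (a a' : E → ℝ) (ha : ∀ e, 0 < a e) (ha' : ∀ e, 0 < a' e)
    (b b' : V → ℝ)
    (hconn : (SimpleGraph.fromRel
      (fun v w => ∃ e, ends e = (v, w) ∨ ends e = (w, v))).Connected)
    (J J' : Matrix V V ℝ)
    (hJ : ∀ v w, J v w =
      if v = w then
        b v + 2 * ∑ e ∈ univ.filter (fun e => ends e = (v, v)), a e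
      else
        ∑ e ∈ univ.filter (fun e => ends e = (v, w) ∨ ends e = (w, v)), a e)
    (hJ' : ∀ v w, J' v w =
      if v = w then
        b' v + 2 * ∑ e ∈ univ.filter (fun e => ends e = (v, v)), a' e
      else
        ∑ e ∈ univ.filter (fun e => ends e = (v, w) ∨ ends e = (w, v)), a' e)
    (hHerm : J.IsHermitian) (hHerm' : J'.IsHermitian)
    (hn : 0 < Fintype.card V)
    -- eigenvalues listed in decreasing order
    (μ μ' : Fin (Fintype.card V) → ℝ) (hμdec : Antitone μ) (hμ'dec : Antitone μ')
    (hμ : ∃ σ : V ≃ Fin (Fintype.card V), μ ∘ σ = hHerm.eigenvalues)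
    (hμ' : ∃ σ : V ≃ Fin (Fintype.card V), μ' ∘ σ = hHerm'.eigenvalues)
    -- normalized positive Perron eigenvectors
    (ψ ψ' : V → ℝ) (hψpos : ∀ v, 0 < ψ v) (hψ'pos : ∀ v, 0 < ψ' v)
    (hψnorm : ∑ v, ψ v ^ 2 = 1) (hψ'norm : ∑ v, ψ' v ^ 2 = 1)
    (hψ : J.mulVec ψ = μ ⟨0, hn⟩ • ψ) (hψ' : J'.mulVec ψ' = μ' ⟨0, hn⟩ • ψ')
    (S I : ℝ)
    (hS : S = univ.sup' univ_nonempty fun e =>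
      (a e * ψ (ends e).1 * ψ (ends e).2) /
        (a' e * ψ' (ends e).1 * ψ' (ends e).2))
    (hI : I = univ.inf' univ_nonempty fun v => ψ v ^ 2 / ψ' v ^ 2) :
    ∀ k : Fin (Fintype.card V),
      μ ⟨0, hn⟩ - μ k ≤ (S / I) * (μ' ⟨0, hn⟩ - μ' k) :=
  stmt5_general V E ends a a' ha ha' b b' J J' hJ hJ' hHerm hHerm' hn μ μ' hμdec hμ'dec hμ hμ' ψ ψ'
    hψpos hψ'pos hψ hψ' S I hS hI
end

section
/- Let J and J̃ be two Jacobi matrices on the same finite connected graph G with n vertices and positive edge weights {a_e}, {ã_e}, and suppose their Perron eigenvectors are proportional: ψ = c ψ̃ for some c > 0. Then for every k, (min_e a_e/ã_e)·(λ₁(J̃) - λ_k(J̃)) ≤ λ₁(J) - λ_k(J) ≤ (max_e a_e/ã_e)·(λ₁(J̃) - λ_k(J̃)). -/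
/-!
Write `x = g ψ` with `ψ` the common positive ground state. Since `J ψ = λ₁ ψ`, the gap form
`λ₁ ‖x‖² - ⟪x, J x⟫` equals `∑ₑ aₑ ψ(u) ψ(v) (g(u) - g(v))²` (ground state representation), and
the same holds for `J̃` with the same edge terms and weights `ãₑ`. Comparing edge by edge gives
`m (λ̃₁ - J̃) ≤ λ₁ - J ≤ M (λ̃₁ - J̃)` as quadratic forms, with `m, M` the extreme ratios
`aₑ / ãₑ`. Courant–Fischer turns this into the eigenvalue inequalities: a nonzero vector in the
span of the top `k + 1` eigenvectors of one matrix and of the bottom `n - k` of the other exists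
by dimension count, and it witnesses the `k`-th inequality.
-/

open Finset Matrix Module Submodule WithLp
open scoped InnerProductSpace

namespace OrthonormalBasis

variable {ι E : Type*} [Fintype ι] [NormedAddCommGroup E] [InnerProductSpace ℝ E]
  (b : OrthonormalBasis ι ℝ E) {T : E →ₗ[ℝ] E} {f : ι → ℝ}

theorem inner_map_self_eq_sum (hT : ∀ i, T (b i) = f i • b i) (x : E) :
    ⟪x, T x⟫_ℝ = ∑ i, f i * ⟪b i, x⟫_ℝ ^ 2 := by
  have hTx : T x = ∑ i, (f i * ⟪b i, x⟫_ℝ) • b i := by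
    conv_lhs => rw [← b.sum_repr' x]
    simp only [map_sum, map_smul, hT, smul_smul, mul_comm]
  simp only [hTx, inner_sum, inner_smul_right, real_inner_comm x]
  exact Finset.sum_congr rfl fun i _ => by ring

theorem inner_eq_zero_of_mem_span_image {s : Set ι} {x : E} (hx : x ∈ span ℝ (b '' s))
    {i : ι} (hi : i ∉ s) : ⟪b i, x⟫_ℝ = 0 := by
  have : span ℝ (b '' s) ≤ LinearMap.ker (innerₛₗ ℝ (b i)) := by
    rw [span_le]
    rintro _ ⟨j, hj, rfl⟩
    exact b.inner_eq_zero (ne_of_mem_of_not_mem hj hi).symm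
  exact this hx

theorem mul_norm_sq_le_inner_map_self (hT : ∀ i, T (b i) = f i • b i) {s : Set ι} {t : ℝ}
    (hs : ∀ i ∈ s, t ≤ f i) {x : E} (hx : x ∈ span ℝ (b '' s)) :
    t * ‖x‖ ^ 2 ≤ ⟪x, T x⟫_ℝ := by
  rw [← b.sum_sq_inner_right, b.inner_map_self_eq_sum hT, mul_sum]
  refine sum_le_sum fun i _ => ?_
  by_cases hi : i ∈ s
  · exact mul_le_mul_of_nonneg_right (hs i hi) (sq_nonneg _)
  · simp [b.inner_eq_zero_of_mem_span_image hx hi]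

theorem inner_map_self_le_mul_norm_sq (hT : ∀ i, T (b i) = f i • b i) {s : Set ι} {t : ℝ}
    (hs : ∀ i ∈ s, f i ≤ t) {x : E} (hx : x ∈ span ℝ (b '' s)) :
    ⟪x, T x⟫_ℝ ≤ t * ‖x‖ ^ 2 := by
  have := b.mul_norm_sq_le_inner_map_self (T := -T) (f := -f) (by simp [hT]) (t := -t)
    (fun i hi => neg_le_neg (hs i hi)) hx
  simp only [LinearMap.neg_apply, inner_neg_right, neg_mul] at this
  linarith

theorem finrank_span_image (s : Set ι) [Fintype s] :
    finrank ℝ (span ℝ (b '' s)) = Fintype.card s := by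
  rw [Set.image_eq_range]
  exact finrank_span_eq_card (b.orthonormal.linearIndependent.comp _ Subtype.val_injective)

variable {n : ℕ}

theorem exists_ne_zero_mem_span_Iic_and_mem_span_Ici (u w : OrthonormalBasis (Fin n) ℝ E)
    (k : Fin n) : ∃ x ≠ 0, x ∈ span ℝ (u '' Set.Iic k) ∧ x ∈ span ℝ (w '' Set.Ici k) := by
  have := u.toBasis.finiteDimensional_of_finite
  set S := span ℝ (u '' Set.Iic k)
  set S' := span ℝ (w '' Set.Ici k)
  have hdim := finrank_sup_add_finrank_inf_eq S S'
  have hsup : finrank ℝ ↥(S ⊔ S') ≤ n :=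
    (Submodule.finrank_le _).trans (by simp [finrank_eq_card_basis u.toBasis])
  rw [finrank_span_image, finrank_span_image, Fintype.card_Iic, Fintype.card_Ici, Fin.card_Iic,
    Fin.card_Ici] at hdim
  obtain ⟨x, hx, hx0⟩ : ∃ x ∈ S ⊓ S', x ≠ 0 := by
    apply Submodule.exists_mem_ne_zero_of_ne_bot
    intro h
    rw [h, finrank_bot] at hdim
    omega
  exact ⟨x, hx0, hx⟩

theorem mul_sub_le_mul_sub_of_forall_le {S : E →ₗ[ℝ] E} {f g : Fin n → ℝ}
    (u w : OrthonormalBasis (Fin n) ℝ E) (hT : ∀ i, T (u i) = f i • u i)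
    (hS : ∀ i, S (w i) = g i • w i) (hf : Antitone f) (hg : Antitone g) {α β c d : ℝ}
    (hc : 0 ≤ c) (hd : 0 ≤ d)
    (hle : ∀ x, c * (α * ‖x‖ ^ 2 - ⟪x, T x⟫_ℝ) ≤ d * (β * ‖x‖ ^ 2 - ⟪x, S x⟫_ℝ)) (k : Fin n) :
    c * (α - f k) ≤ d * (β - g k) := by
  obtain ⟨x, hx0, hxw, hxu⟩ := exists_ne_zero_mem_span_Iic_and_mem_span_Ici w u k
  have hTx := u.inner_map_self_le_mul_norm_sq hT (fun i hi => hf (Set.mem_Ici.mp hi)) hxu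
  have hSx := w.mul_norm_sq_le_inner_map_self hS (fun i hi => hg (Set.mem_Iic.mp hi)) hxw
  have hx : 0 < ‖x‖ ^ 2 := by positivity
  refine le_of_mul_le_mul_right ?_ hx
  calc c * (α - f k) * ‖x‖ ^ 2 ≤ c * (α * ‖x‖ ^ 2 - ⟪x, T x⟫_ℝ) := by nlinarith
    _ ≤ d * (β * ‖x‖ ^ 2 - ⟪x, S x⟫_ℝ) := hle x
    _ ≤ d * (β - g k) * ‖x‖ ^ 2 := by nlinarith

end OrthonormalBasis

theorem Finset.inf'_div_mul_sum_le {ι : Type*} {s : Finset ι} (hs : s.Nonempty) {a a' d : ι → ℝ}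
    (ha' : ∀ i ∈ s, 0 < a' i) (hd : ∀ i ∈ s, 0 ≤ d i) :
    s.inf' hs (fun i => a i / a' i) * ∑ i ∈ s, a' i * d i ≤ ∑ i ∈ s, a i * d i := by
  rw [mul_sum]
  refine sum_le_sum fun i hi => ?_
  calc s.inf' hs (fun i => a i / a' i) * (a' i * d i) ≤ a i / a' i * (a' i * d i) :=
        mul_le_mul_of_nonneg_right (inf'_le _ hi) (mul_nonneg (ha' i hi).le (hd i hi))
    _ = a i * d i := by field_simp [(ha' i hi).ne']

theorem Finset.sum_le_sup'_div_mul_sum {ι : Type*} {s : Finset ι} (hs : s.Nonempty)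
    {a a' d : ι → ℝ} (ha' : ∀ i ∈ s, 0 < a' i) (hd : ∀ i ∈ s, 0 ≤ d i) :
    ∑ i ∈ s, a i * d i ≤ s.sup' hs (fun i => a i / a' i) * ∑ i ∈ s, a' i * d i := by
  rw [mul_sum]
  refine sum_le_sum fun i hi => ?_
  calc a i * d i = a i / a' i * (a' i * d i) := by field_simp [(ha' i hi).ne']
    _ ≤ s.sup' hs (fun i => a i / a' i) * (a' i * d i) :=
        mul_le_mul_of_nonneg_right (le_sup' (fun i => a i / a' i) hi)
          (mul_nonneg (ha' i hi).le (hd i hi))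

section Jacobi

variable {V E : Type*} [Fintype E] [DecidableEq V]

def jacobiMatrix (ends : E → V × V) (a : E → ℝ) (b : V → ℝ) : Matrix V V ℝ :=
  diagonal b + ∑ e, (single (ends e).1 (ends e).2 (a e) + single (ends e).2 (ends e).1 (a e))

variable (ends : E → V × V) (a : E → ℝ) (b : V → ℝ)

theorem jacobiMatrix_apply (v w : V) :
    jacobiMatrix ends a b v w =
      if v = w then
        b v + 2 * ∑ e ∈ univ.filter (fun e => ends e = (v, v)), a e
      else
        ∑ e ∈ univ.filter (fun e => ends e = (v, w) ∨ ends e = (w, v)), a e := by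
  simp only [jacobiMatrix, Matrix.add_apply, diagonal_apply, Matrix.sum_apply, single_apply,
    sum_filter, mul_sum]
  split_ifs with hvw
  · subst hvw
    congr 1
    exact sum_congr rfl fun e _ => by grind
  · rw [zero_add]
    exact sum_congr rfl fun e _ => by grind

variable [Fintype V]

theorem dotProduct_jacobiMatrix_mulVec (x y : V → ℝ) :
    y ⬝ᵥ jacobiMatrix ends a b *ᵥ x =
      ∑ v, b v * y v * x v +
        ∑ e, a e * (y (ends e).1 * x (ends e).2 + y (ends e).2 * x (ends e).1) := by
  rw [jacobiMatrix, add_mulVec, dotProduct_add, sum_mulVec, dotProduct_sum]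
  congr 1
  · exact sum_congr rfl fun v _ => by rw [mulVec_diagonal]; ring
  · refine sum_congr rfl fun e _ => ?_
    rw [add_mulVec, single_mulVec_eq, single_mulVec_eq, dotProduct_add, dotProduct_smul,
      dotProduct_smul, dotProduct_single, dotProduct_single, smul_eq_mul, smul_eq_mul]
    ring

theorem jacobiMatrix_ground_state_representation {ψ : V → ℝ} {μ : ℝ}
    (hψ : jacobiMatrix ends a b *ᵥ ψ = μ • ψ) (g : V → ℝ) :
    μ * ((g * ψ) ⬝ᵥ (g * ψ)) - (g * ψ) ⬝ᵥ jacobiMatrix ends a b *ᵥ (g * ψ) =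
      ∑ e, a e * (ψ (ends e).1 * ψ (ends e).2 * (g (ends e).1 - g (ends e).2) ^ 2) := by
  have hμ : μ * ((g * ψ) ⬝ᵥ (g * ψ)) = (g * g * ψ) ⬝ᵥ jacobiMatrix ends a b *ᵥ ψ := by
    rw [hψ, dotProduct_smul, smul_eq_mul]
    simp only [dotProduct, Pi.mul_apply]
    congr 1
    exact sum_congr rfl fun v _ => by ring
  rw [hμ, dotProduct_jacobiMatrix_mulVec, dotProduct_jacobiMatrix_mulVec, add_sub_add_comm,
    ← sum_sub_distrib, ← sum_sub_distrib, sum_eq_zero fun v _ => by simp only [Pi.mul_apply]; ring,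
    zero_add]
  exact sum_congr rfl fun e _ => by simp only [Pi.mul_apply]; ring

theorem jacobiMatrix_gap_comparison [Nonempty E] {a a' : E → ℝ} {b b' : V → ℝ} {ψ : V → ℝ}
    {μ μ' : ℝ} (hψ : jacobiMatrix ends a b *ᵥ ψ = μ • ψ)
    (hψ' : jacobiMatrix ends a' b' *ᵥ ψ = μ' • ψ) (hψpos : ∀ v, 0 < ψ v) (ha' : ∀ e, 0 < a' e)
    (x : V → ℝ) :
    (univ.inf' univ_nonempty fun e => a e / a' e) *
        (μ' * (x ⬝ᵥ x) - x ⬝ᵥ jacobiMatrix ends a' b' *ᵥ x) ≤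
      μ * (x ⬝ᵥ x) - x ⬝ᵥ jacobiMatrix ends a b *ᵥ x ∧
    μ * (x ⬝ᵥ x) - x ⬝ᵥ jacobiMatrix ends a b *ᵥ x ≤
      (univ.sup' univ_nonempty fun e => a e / a' e) *
        (μ' * (x ⬝ᵥ x) - x ⬝ᵥ jacobiMatrix ends a' b' *ᵥ x) := by
  have hx : x / ψ * ψ = x := funext fun v => div_mul_cancel₀ (x v) (hψpos v).ne'
  rw [← hx, jacobiMatrix_ground_state_representation ends a b hψ,
    jacobiMatrix_ground_state_representation ends a' b' hψ']
  have hd : ∀ e ∈ univ, 0 ≤ ψ (ends e).1 * ψ (ends e).2 *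
      ((x / ψ) (ends e).1 - (x / ψ) (ends e).2) ^ 2 := fun e _ => by
    have := hψpos (ends e).1
    have := hψpos (ends e).2
    positivity
  exact ⟨inf'_div_mul_sum_le _ (fun e _ => ha' e) hd,
    sum_le_sup'_div_mul_sum _ (fun e _ => ha' e) hd⟩

end Jacobi

section EuclideanSpace

variable {V : Type*} [Fintype V]

theorem EuclideanSpace.norm_sq_eq_dotProduct (x : EuclideanSpace ℝ V) :
    ‖x‖ ^ 2 = ofLp x ⬝ᵥ ofLp x := by
  rw [← real_inner_self_eq_norm_sq, EuclideanSpace.inner_eq_star_dotProduct, star_trivial]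

variable [DecidableEq V]

theorem Matrix.inner_toEuclideanLin_self (A : Matrix V V ℝ) (x : EuclideanSpace ℝ V) :
    ⟪x, toEuclideanLin A x⟫_ℝ = ofLp x ⬝ᵥ A *ᵥ ofLp x := by
  rw [EuclideanSpace.inner_eq_star_dotProduct, star_trivial, dotProduct_comm]
  rfl

theorem Matrix.IsHermitian.exists_orthonormalBasis_of_comp_eq_eigenvalues {A : Matrix V V ℝ}
    (hA : A.IsHermitian) {μ : Fin (Fintype.card V) → ℝ}
    (hμ : ∃ σ : V ≃ Fin (Fintype.card V), μ ∘ σ = hA.eigenvalues) :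
    ∃ u : OrthonormalBasis (Fin (Fintype.card V)) ℝ (EuclideanSpace ℝ V),
      ∀ i, toEuclideanLin A (u i) = μ i • u i := by
  obtain ⟨σ, hσ⟩ := hμ
  refine ⟨hA.eigenvectorBasis.reindex σ, fun i => ?_⟩
  have := hA.mulVec_eigenvectorBasis (σ.symm i)
  rw [← hσ] at this
  simp [toLpLin_apply, this]

end EuclideanSpace

theorem stmt6_general (V E : Type*) [Fintype V] [Fintype E] [DecidableEq V]
    [Nonempty E]
    (ends : E → V × V) (a a' : E → ℝ) (ha : ∀ e, 0 < a e) (ha' : ∀ e, 0 < a' e)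
    (b b' : V → ℝ)
    (J J' : Matrix V V ℝ)
    (hJ : ∀ v w, J v w =
      if v = w then
        b v + 2 * ∑ e ∈ univ.filter (fun e => ends e = (v, v)), a e
      else
        ∑ e ∈ univ.filter (fun e => ends e = (v, w) ∨ ends e = (w, v)), a e)
    (hJ' : ∀ v w, J' v w =
      if v = w then
        b' v + 2 * ∑ e ∈ univ.filter (fun e => ends e = (v, v)), a' e
      else
        ∑ e ∈ univ.filter (fun e => ends e = (v, w) ∨ ends e = (w, v)), a' e)
    (hHerm : J.IsHermitian) (hHerm' : J'.IsHermitian)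
    (hn : 0 < Fintype.card V)
    -- eigenvalues listed in decreasing order
    (μ μ' : Fin (Fintype.card V) → ℝ) (hμdec : Antitone μ) (hμ'dec : Antitone μ')
    (hμ : ∃ σ : V ≃ Fin (Fintype.card V), μ ∘ σ = hHerm.eigenvalues)
    (hμ' : ∃ σ : V ≃ Fin (Fintype.card V), μ' ∘ σ = hHerm'.eigenvalues)
    -- normalized positive Perron eigenvectors
    (ψ ψ' : V → ℝ) (hψ'pos : ∀ v, 0 < ψ' v)
    (hψ : J.mulVec ψ = μ ⟨0, hn⟩ • ψ) (hψ' : J'.mulVec ψ' = μ' ⟨0, hn⟩ • ψ')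
    -- the Perron eigenvectors are proportional
    (c : ℝ) (hc : 0 < c) (hprop : ψ = c • ψ') :
    ∀ k : Fin (Fintype.card V),
      (univ.inf' univ_nonempty fun e => a e / a' e) * (μ' ⟨0, hn⟩ - μ' k)
        ≤ μ ⟨0, hn⟩ - μ k ∧
      μ ⟨0, hn⟩ - μ k
        ≤ (univ.sup' univ_nonempty fun e => a e / a' e) * (μ' ⟨0, hn⟩ - μ' k) := by
  intro k
  obtain rfl : J = jacobiMatrix ends a b := Matrix.ext fun v w => by rw [hJ, jacobiMatrix_apply]
  obtain rfl : J' = jacobiMatrix ends a' b' :=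
    Matrix.ext fun v w => by rw [hJ', jacobiMatrix_apply]
  have hJψ' : jacobiMatrix ends a b *ᵥ ψ' = μ ⟨0, hn⟩ • ψ' := by
    rw [hprop, mulVec_smul, smul_comm] at hψ
    exact smul_right_injective _ hc.ne' hψ
  obtain ⟨u, hu⟩ := hHerm.exists_orthonormalBasis_of_comp_eq_eigenvalues hμ
  obtain ⟨u', hu'⟩ := hHerm'.exists_orthonormalBasis_of_comp_eq_eigenvalues hμ'
  have hcmp (x : EuclideanSpace ℝ V) :=
    jacobiMatrix_gap_comparison ends hJψ' hψ' hψ'pos ha' (ofLp x)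
  simp only [← EuclideanSpace.norm_sq_eq_dotProduct, ← inner_toEuclideanLin_self] at hcmp
  have hratio (e : E) : 0 ≤ a e / a' e := (div_pos (ha e) (ha' e)).le
  constructor
  · simpa only [one_mul] using u'.mul_sub_le_mul_sub_of_forall_le u hu' hu hμ'dec hμdec
      (le_inf' _ _ fun e _ => hratio e) zero_le_one
      (fun x => by simpa only [one_mul] using (hcmp x).1) k
  · have hM := (hratio _).trans
      (le_sup' (fun e => a e / a' e) (mem_univ (Classical.arbitrary E)))
    simpa only [one_mul] using u.mul_sub_le_mul_sub_of_forall_le u' hu hu' hμdec hμ'dec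
      zero_le_one hM (fun x => by simpa only [one_mul] using (hcmp x).2) k

/-- Comparison of eigenvalue gaps for two Jacobi matrices on the same finite
connected (multi)graph, via their ground states. Eigenvalues `μ`, `μ'` are
listed in decreasing order. -/
theorem stmt6 (V E : Type*) [Fintype V] [Fintype E] [DecidableEq V]
    [Nonempty V] [Nonempty E]
    (ends : E → V × V) (a a' : E → ℝ) (ha : ∀ e, 0 < a e) (ha' : ∀ e, 0 < a' e)
    (b b' : V → ℝ)
    (hconn : (SimpleGraph.fromRel
      (fun v w => ∃ e, ends e = (v, w) ∨ ends e = (w, v))).Connected)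
    (J J' : Matrix V V ℝ)
    (hJ : ∀ v w, J v w =
      if v = w then
        b v + 2 * ∑ e ∈ univ.filter (fun e => ends e = (v, v)), a e
      else
        ∑ e ∈ univ.filter (fun e => ends e = (v, w) ∨ ends e = (w, v)), a e)
    (hJ' : ∀ v w, J' v w =
      if v = w then
        b' v + 2 * ∑ e ∈ univ.filter (fun e => ends e = (v, v)), a' e
      else
        ∑ e ∈ univ.filter (fun e => ends e = (v, w) ∨ ends e = (w, v)), a' e)
    (hHerm : J.IsHermitian) (hHerm' : J'.IsHermitian)
    (hn : 0 < Fintype.card V)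
    -- eigenvalues listed in decreasing order
    (μ μ' : Fin (Fintype.card V) → ℝ) (hμdec : Antitone μ) (hμ'dec : Antitone μ')
    (hμ : ∃ σ : V ≃ Fin (Fintype.card V), μ ∘ σ = hHerm.eigenvalues)
    (hμ' : ∃ σ : V ≃ Fin (Fintype.card V), μ' ∘ σ = hHerm'.eigenvalues)
    -- normalized positive Perron eigenvectors
    (ψ ψ' : V → ℝ) (hψpos : ∀ v, 0 < ψ v) (hψ'pos : ∀ v, 0 < ψ' v)
    (hψnorm : ∑ v, ψ v ^ 2 = 1) (hψ'norm : ∑ v, ψ' v ^ 2 = 1)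
    (hψ : J.mulVec ψ = μ ⟨0, hn⟩ • ψ) (hψ' : J'.mulVec ψ' = μ' ⟨0, hn⟩ • ψ')
    -- the Perron eigenvectors are proportional
    (c : ℝ) (hc : 0 < c) (hprop : ψ = c • ψ') :
    ∀ k : Fin (Fintype.card V),
      (univ.inf' univ_nonempty fun e => a e / a' e) * (μ' ⟨0, hn⟩ - μ' k)
        ≤ μ ⟨0, hn⟩ - μ k ∧
      μ ⟨0, hn⟩ - μ k
        ≤ (univ.sup' univ_nonempty fun e => a e / a' e) * (μ' ⟨0, hn⟩ - μ' k) :=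
  stmt6_general V E ends a a' ha ha' b b' J J' hJ hJ' hHerm hHerm' hn μ μ' hμdec hμ'dec hμ hμ' ψ ψ'
    hψ'pos hψ hψ' c hc hprop
end
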